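/- Let n > 2 and 2 ≤ k ≤ n, and consider F_k(K_{2,n}) with parts X = {x_1, x_2} and Y. Let Ω be the set of (k−1)-element subsets of Y. For a family α ⊆ Ω, define φ_α on vertices of F_k(K_{2,n}) by: φ_α(A) = (A \ X) ∪ (X \ A) if |A ∩ X| = 1 and A ∩ Y ∈ α (i.e., the single X-element of A is replaced by the other element of X), and φ_α(A) = A otherwise. Then each φ_α is an automorphism of F_k(K_{2,n}), φ_α ∘ φ_β = φ_{α △ β} for all α, β ⊆ Ω, and the map α ↦ φ_α is an injective group homomorphism from the group of subsets of Ω under symmetric difference (isomorphic to (ℤ/2ℤ)^{C(n,k−1)}) into Aut(F_k(K_{2,n})). -/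

import Mathlib

/-- The `k`-token graph of a simple graph `G`: vertices are the `k`-element
subsets of the vertex set, two subsets being adjacent iff their symmetric
difference is a pair `{a, b}` with `ab` an edge of `G`. -/
def tokenGraph {V : Type*} [DecidableEq V] (G : SimpleGraph V) (k : ℕ) :
    SimpleGraph {A : Finset V // A.card = k} where
  Adj A B := ∃ a b, G.Adj a b ∧ symmDiff A.1 B.1 = {a, b}
  symm := by
    constructor
    rintro A B ⟨a, b, hab, h⟩
    exact ⟨a, b, hab, by rwa [symmDiff_comm]⟩
  loopless := by
    constructor
    rintro A ⟨a, b, hab, h⟩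
    rw [symmDiff_self] at h
    exact absurd h.symm (by simp)
/-- The number of elements of a finite set of vertices of `K_{m,n}`
(on `Fin m ⊕ Fin n`) lying in the left part `X`. -/
def leftCard {m n : ℕ} (A : Finset (Fin m ⊕ Fin n)) : ℕ :=
  (A.filter (fun v => v.isLeft = true)).card

/-- `H_i`: the set of vertices `A` of `F_k(K_{m,n})` with `|A ∩ X| = i`. -/
def levelSet (m n k i : ℕ) :
    Set {A : Finset (Fin m ⊕ Fin n) // A.card = k} :=
  {A | leftCard A.1 = i}

/-- The part of a set of vertices of K_{2,n} lying in the right part Y,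
viewed as a subset of Fin n. -/
def yPart {n : ℕ} (A : Finset (Fin 2 ⊕ Fin n)) : Finset (Fin n) :=
  Finset.univ.filter (fun j => Sum.inr j ∈ A)

/-- The involution of V(K_{2,n}) exchanging the two vertices of the left
part X and fixing the right part Y. -/
def flipX {n : ℕ} : Fin 2 ⊕ Fin n → Fin 2 ⊕ Fin n :=
  Sum.elim (fun i => Sum.inl (i + 1)) Sum.inr

/-! Write `X = {x₁, x₂}`. If `|A ∩ X| = 1`, exchanging `x₁` and `x₂` in `A` is the same as
`A ↦ A △ X`, and then `A` and `A △ X` are twins in `F_k(K_{2,n})`: an edge `A ~ B` means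
`A △ B = {x, y}` with `x ∈ X`, `y ∈ Y`, and `(A △ X) △ B = X △ {x, y} = {x', y}` with `x'` the
other vertex of `X`. An involution sending every vertex to a twin is an automorphism, which makes
each `φ_α` one. Two swaps `φ_α`, `φ_β` act on the same pairs `{A, A △ X}`, so they compose to
`φ_{α △ β}`; and `α` is recovered from `φ_α` since `φ_α` moves `{x₁} ∪ S` exactly when `S ∈ α`. -/

open Finset

namespace SimpleGraph

/-- Applied to `σ v`, `hadj` gives its converse, so `σ v` and `v` are twins. -/
def Iso.ofInvolutive {V : Type*} {G : SimpleGraph V} {σ : V → V} (hσ : Function.Involutive σ)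
    (hadj : ∀ v w, G.Adj v w → G.Adj (σ v) w) : G ≃g G where
  toEquiv := hσ.toPerm σ
  map_rel_iff' := by
    have key : ∀ {v w}, G.Adj v w → G.Adj (σ v) (σ w) := fun h =>
      (hadj _ _ (hadj _ _ h).symm).symm
    intro v w
    simp only [Function.Involutive.coe_toPerm]
    refine ⟨fun h => ?_, key⟩
    simpa only [hσ v, hσ w] using key h

end SimpleGraph

theorem tokenGraph_completeBipartiteGraph_adj {α β : Type*} [DecidableEq α] [DecidableEq β]
    {k : ℕ} {A B : {A : Finset (α ⊕ β) // A.card = k}} :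
    (tokenGraph (completeBipartiteGraph α β) k).Adj A B ↔
      ∃ x y, symmDiff A.1 B.1 = {Sum.inl x, Sum.inr y} := by
  refine ⟨fun ⟨a, b, hab, h⟩ => ?_, fun ⟨x, y, h⟩ => ⟨_, _, by simp, h⟩⟩
  rcases a with x | y <;> rcases b with x' | y' <;> simp at hab
  · exact ⟨x, y', h⟩
  · exact ⟨x', y, by rwa [pair_comm] at h⟩

theorem leftCard_eq_one_iff {m n : ℕ} {A : Finset (Fin m ⊕ Fin n)} :
    leftCard A = 1 ↔ ∃ x, ∀ i, Sum.inl i ∈ A ↔ i = x := by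
  rw [leftCard, card_eq_one]
  constructor
  · rintro ⟨a, ha⟩
    have ha_mem : a ∈ A.filter (fun v => v.isLeft = true) := ha ▸ mem_singleton_self a
    obtain ⟨x, rfl⟩ : ∃ x, a = Sum.inl x := by
      rcases a with x | y
      · exact ⟨x, rfl⟩
      · simp at ha_mem
    refine ⟨x, fun i => ?_⟩
    simpa using Finset.ext_iff.1 ha (Sum.inl i)
  · rintro ⟨x, hx⟩
    refine ⟨Sum.inl x, ext fun v => ?_⟩
    rcases v with i | j <;> simp [hx]

namespace K2n

variable {n : ℕ}

theorem fin_two_add_one_eq_iff (i x : Fin 2) : i + 1 = x ↔ i ≠ x := by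
  revert i x
  decide

theorem flipX_involutive : Function.Involutive (flipX (n := n)) := by
  rintro (i | j)
  · show Sum.inl (i + 1 + 1) = Sum.inl i
    congr 1
    omega
  · rfl

theorem mem_image_flipX {A : Finset (Fin 2 ⊕ Fin n)} {v : Fin 2 ⊕ Fin n} :
    v ∈ A.image flipX ↔ flipX v ∈ A := by
  conv_lhs => rw [← flipX_involutive v]
  exact flipX_involutive.injective.mem_finset_image

theorem image_flipX_eq_symmDiff {A : Finset (Fin 2 ⊕ Fin n)} (hA : leftCard A = 1) :
    A.image flipX = symmDiff A (univ.map .inl) := by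
  obtain ⟨x, hx⟩ := leftCard_eq_one_iff.1 hA
  ext v
  rw [mem_image_flipX]
  rcases v with i | j
  · simp only [flipX, Sum.elim_inl, hx, fin_two_add_one_eq_iff]
    simp [mem_symmDiff, hx]
  · simp [flipX, mem_symmDiff]

theorem leftCard_image_flipX (A : Finset (Fin 2 ⊕ Fin n)) :
    leftCard (A.image flipX) = leftCard A := by
  rw [leftCard, filter_image, card_image_of_injective _ flipX_involutive.injective, leftCard]
  congr 1
  refine filter_congr fun v _ => ?_
  rcases v with i | j <;> rfl

theorem yPart_image_flipX (A : Finset (Fin 2 ⊕ Fin n)) : yPart (A.image flipX) = yPart A :=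
  filter_congr fun _ _ => mem_image_flipX

theorem map_inl_univ_symmDiff_pair (x : Fin 2) (y : Fin n) :
    symmDiff (univ.map .inl) {Sum.inl x, Sum.inr y} =
      ({Sum.inl (x + 1), Sum.inr y} : Finset (Fin 2 ⊕ Fin n)) := by
  ext (i | j)
  · simp [mem_symmDiff, ← fin_two_add_one_eq_iff, eq_comm]
  · simp [mem_symmDiff]

/-- `φ_α` on the underlying vertex sets. -/
def swapLeft (α : Finset (Finset (Fin n))) (A : Finset (Fin 2 ⊕ Fin n)) :
    Finset (Fin 2 ⊕ Fin n) :=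
  if leftCard A = 1 ∧ yPart A ∈ α then A.image flipX else A

theorem card_swapLeft (α : Finset (Finset (Fin n))) (A : Finset (Fin 2 ⊕ Fin n)) :
    (swapLeft α A).card = A.card := by
  unfold swapLeft
  split_ifs
  exacts [card_image_of_injective _ flipX_involutive.injective, rfl]

theorem swapLeft_swapLeft (α β : Finset (Finset (Fin n))) (A : Finset (Fin 2 ⊕ Fin n)) :
    swapLeft α (swapLeft β A) = swapLeft (symmDiff α β) A := by
  by_cases hA : leftCard A = 1 <;> by_cases hα : yPart A ∈ α <;> by_cases hβ : yPart A ∈ β <;>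
    simp [swapLeft, hA, hα, hβ, leftCard_image_flipX, yPart_image_flipX, mem_symmDiff,
      image_image, flipX_involutive.comp_self]

theorem swapLeft_involutive (α : Finset (Finset (Fin n))) : Function.Involutive (swapLeft α) :=
  fun A => by rw [swapLeft_swapLeft, symmDiff_self]; exact if_neg (by simp)

theorem swapLeft_eq_self_iff {α : Finset (Finset (Fin n))} {A : Finset (Fin 2 ⊕ Fin n)}
    (hA : leftCard A = 1) : swapLeft α A = A ↔ yPart A ∉ α := by
  by_cases h : yPart A ∈ α
  · simp [swapLeft, hA, h, image_flipX_eq_symmDiff hA, univ_eq_empty_iff]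
  · simp [swapLeft, h]

theorem exists_symmDiff_swapLeft_eq_pair (α : Finset (Finset (Fin n)))
    {A B : Finset (Fin 2 ⊕ Fin n)} {x : Fin 2} {y : Fin n}
    (h : symmDiff A B = {Sum.inl x, Sum.inr y}) :
    ∃ x', symmDiff (swapLeft α A) B = {Sum.inl x', Sum.inr y} := by
  unfold swapLeft
  split_ifs with hA
  · refine ⟨x + 1, ?_⟩
    rw [image_flipX_eq_symmDiff hA.1, symmDiff_right_comm, h, symmDiff_comm,
      map_inl_univ_symmDiff_pair]
  · exact ⟨x, h⟩

theorem exists_leftCard_eq_one_yPart_eq (S : Finset (Fin n)) :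
    ∃ A : Finset (Fin 2 ⊕ Fin n), A.card = S.card + 1 ∧ leftCard A = 1 ∧ yPart A = S := by
  refine ⟨cons (Sum.inl 0) (S.map .inr) (by simp), by simp, ?_, by ext; simp [yPart]⟩
  exact leftCard_eq_one_iff.2 ⟨0, fun i => by simp⟩

theorem mem_of_swapLeft_eq {k : ℕ} (hk : 1 ≤ k) {α β : Finset (Finset (Fin n))}
    (h : ∀ A : Finset (Fin 2 ⊕ Fin n), A.card = k → swapLeft α A = swapLeft β A)
    {S : Finset (Fin n)} (hS : S.card = k - 1) (hSα : S ∈ α) : S ∈ β := by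
  obtain ⟨A, hAk, hA, rfl⟩ := exists_leftCard_eq_one_yPart_eq S
  have hαA : swapLeft α A ≠ A := by simpa [swapLeft_eq_self_iff hA] using hSα
  rw [h A (by omega)] at hαA
  simpa [swapLeft_eq_self_iff hA] using hαA

def swapLeftIso (α : Finset (Finset (Fin n))) (k : ℕ) :
    tokenGraph (completeBipartiteGraph (Fin 2) (Fin n)) k ≃g
      tokenGraph (completeBipartiteGraph (Fin 2) (Fin n)) k :=
  SimpleGraph.Iso.ofInvolutive
    (σ := fun A => ⟨swapLeft α A.1, (card_swapLeft α A.1).trans A.2⟩)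
    (fun A => Subtype.ext (swapLeft_involutive α A.1))
    (fun _ _ hAB => by
      obtain ⟨x, y, h⟩ := tokenGraph_completeBipartiteGraph_adj.1 hAB
      obtain ⟨x', h'⟩ := exists_symmDiff_swapLeft_eq_pair α h
      exact tokenGraph_completeBipartiteGraph_adj.2 ⟨x', y, h'⟩)

end K2n

theorem swap_homomorphism_tokenGraph_K2n_general (n k : ℕ)
    (hk1 : 2 ≤ k) :
    ∃ Φ : Finset (Finset (Fin n)) →
        (tokenGraph (completeBipartiteGraph (Fin 2) (Fin n)) k ≃g
          tokenGraph (completeBipartiteGraph (Fin 2) (Fin n)) k),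
      (∀ (α : Finset (Finset (Fin n)))
          (A : {A : Finset (Fin 2 ⊕ Fin n) // A.card = k}),
        ((Φ α) A).1 =
          if leftCard A.1 = 1 ∧ yPart A.1 ∈ α then A.1.image flipX else A.1) ∧
      (∀ α β : Finset (Finset (Fin n)),
        (∀ S ∈ α, S.card = k - 1) → (∀ S ∈ β, S.card = k - 1) →
        ∀ A, Φ α (Φ β A) = Φ (symmDiff α β) A) ∧
      Function.Injective
        (fun αs : {a : Finset (Finset (Fin n)) // ∀ S ∈ a, S.card = k - 1} =>
          Φ αs.1) := by
  refine ⟨fun α => K2n.swapLeftIso α k, fun α A => rfl,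
    fun α β _ _ A => Subtype.ext (K2n.swapLeft_swapLeft α β A.1), ?_⟩
  rintro ⟨α, hα⟩ ⟨β, hβ⟩ h
  have hswap (A : Finset (Fin 2 ⊕ Fin n)) (hA : A.card = k) :
      K2n.swapLeft α A = K2n.swapLeft β A :=
    congrArg Subtype.val (RelIso.ext_iff.1 h ⟨A, hA⟩)
  ext S
  exact ⟨fun hS => K2n.mem_of_swapLeft_eq (by omega) hswap (hα S hS) hS,
    fun hS => K2n.mem_of_swapLeft_eq (by omega) (fun A hA => (hswap A hA).symm) (hβ S hS) hS⟩

/-- For n > 2 and 2 ≤ k ≤ n, the maps φ_α (α a family of (k−1)-subsets of Y)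
— replacing, in each vertex A with |A ∩ X| = 1 and A ∩ Y ∈ α, the X-element
of A by the other element of X — are automorphisms of F_k(K_{2,n}) with
φ_α ∘ φ_β = φ_{α △ β}, and α ↦ φ_α is injective on families of
(k−1)-subsets; hence they give an injective homomorphism of
(ℤ/2ℤ)^{C(n,k−1)} into Aut(F_k(K_{2,n})). -/
theorem swap_homomorphism_tokenGraph_K2n (n k : ℕ) (hn : 2 < n)
    (hk1 : 2 ≤ k) (hk2 : k ≤ n) :
    ∃ Φ : Finset (Finset (Fin n)) →
        (tokenGraph (completeBipartiteGraph (Fin 2) (Fin n)) k ≃g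
          tokenGraph (completeBipartiteGraph (Fin 2) (Fin n)) k),
      (∀ (α : Finset (Finset (Fin n)))
          (A : {A : Finset (Fin 2 ⊕ Fin n) // A.card = k}),
        ((Φ α) A).1 =
          if leftCard A.1 = 1 ∧ yPart A.1 ∈ α then A.1.image flipX else A.1) ∧
      (∀ α β : Finset (Finset (Fin n)),
        (∀ S ∈ α, S.card = k - 1) → (∀ S ∈ β, S.card = k - 1) →
        ∀ A, Φ α (Φ β A) = Φ (symmDiff α β) A) ∧
      Function.Injective
        (fun αs : {a : Finset (Finset (Fin n)) // ∀ S ∈ a, S.card = k - 1} =>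
          Φ αs.1) :=
  swap_homomorphism_tokenGraph_K2n_general n k hk1
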